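/- The quartic/linear interpolation kernel S¹_{4/1} with parameters a₀₁ > -1 and a₀₂ satisfies the partition of unity property: for every real t, the sum over all integers i of S¹_{4/1}(t - i) equals 1. -/

import Mathlib

noncomputable def S41a (a1 a2 t : ℝ) : ℝ :=
  if |t| < 1 then
    (1 - |t|) ^ 2 * (1 + (2 + a1) * |t| + (3 + 2 * a1 + a2) * |t| ^ 2) / (1 + a1 * |t|)
  else if |t| < 2 then
    (2 - |t|) ^ 2 * (1 - |t|) ^ 2 * (3 + a2) / (-1 - 2 * a1 + a1 * |t|)
  else 0

lemma S41a_zero (a1 a2 x : ℝ) (hx : 2 ≤ |x|) : S41a a1 a2 x = 0 := by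
  unfold S41a
  rw [if_neg (by linarith), if_neg (by linarith)]

lemma S41a_four (a1 a2 : ℝ) (ha1 : -1 < a1) (s : ℝ) (hs0 : 0 ≤ s) (hs1 : s < 1) :
    S41a a1 a2 (s + 1) + S41a a1 a2 s + S41a a1 a2 (s - 1) + S41a a1 a2 (s - 2) = 1 := by
  have h1 : |s + 1| = s + 1 := abs_of_nonneg (by linarith)
  have h2 : |s| = s := abs_of_nonneg hs0
  have h3 : |s - 1| = 1 - s := by rw [abs_of_nonpos (by linarith)]; ring
  have h4 : |s - 2| = 2 - s := by rw [abs_of_nonpos (by linarith)]; ring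
  unfold S41a
  rw [h1, h2, h3, h4]
  rcases eq_or_lt_of_le hs0 with h0 | h0
  · rw [← h0]
    norm_num
  · have d1 : (0:ℝ) < 1 + a1 * s := by nlinarith
    have d2 : (0:ℝ) < 1 + a1 * (1 - s) := by nlinarith
    have d3 : -1 - 2 * a1 + a1 * (s + 1) ≠ 0 := by intro h; nlinarith
    have d4 : -1 - 2 * a1 + a1 * (2 - s) ≠ 0 := by intro h; nlinarith
    rw [if_neg (by linarith), if_pos (by linarith), if_pos (by linarith),
      if_pos (by linarith), if_neg (by linarith), if_pos (by linarith)]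
    rw [div_add_div _ _ d3 (ne_of_gt d1), div_add_div _ _ (mul_ne_zero d3 d1.ne') d2.ne',
      div_add_div _ _ (mul_ne_zero (mul_ne_zero d3 d1.ne') d2.ne') d4,
      div_eq_one_iff_eq (mul_ne_zero (mul_ne_zero (mul_ne_zero d3 d1.ne') d2.ne') d4)]
    ring

theorem S41a_partition_of_unity (a1 a2 : ℝ) (ha1 : -1 < a1) (t : ℝ) :
    ∑' i : ℤ, S41a a1 a2 (t - i) = 1 := by
  set n : ℤ := ⌊t⌋ with hn
  have hs0 : 0 ≤ t - n := by
    have := Int.floor_le t; linarith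
  have hs1 : t - n < 1 := by
    have := Int.lt_floor_add_one t; push_cast; linarith
  have hsum : ∑' i : ℤ, S41a a1 a2 (t - i)
      = ∑ i ∈ ({n - 1, n, n + 1, n + 2} : Finset ℤ), S41a a1 a2 (t - i) := by
    apply tsum_eq_sum
    intro i hi
    simp only [Finset.mem_insert, Finset.mem_singleton] at hi
    push_neg at hi
    apply S41a_zero
    have : i ≤ n - 2 ∨ n + 3 ≤ i := by omega
    rcases this with h | h
    · rw [abs_of_nonneg (by push_cast; linarith [(by exact_mod_cast h : (i:ℝ) ≤ (n:ℝ) - 2)])]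
      have : (i:ℝ) ≤ (n:ℝ) - 2 := by exact_mod_cast h
      linarith
    · have : (n:ℝ) + 3 ≤ (i:ℝ) := by exact_mod_cast h
      rw [abs_of_nonpos (by linarith)]
      linarith
  rw [hsum]
  rw [Finset.sum_insert (by simp only [Finset.mem_insert, Finset.mem_singleton]; omega), Finset.sum_insert (by simp only [Finset.mem_insert, Finset.mem_singleton]; omega),
    Finset.sum_insert (by simp only [Finset.mem_insert, Finset.mem_singleton]; omega), Finset.sum_singleton]
  have e1 : t - ((n:ℝ) - 1) = (t - n) + 1 := by ring
  have e2 : t - ((n:ℝ) + 1) = (t - n) - 1 := by ring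
  have e3 : t - ((n:ℝ) + 2) = (t - n) - 2 := by ring
  push_cast
  rw [e1, e2, e3]
  have := S41a_four a1 a2 ha1 (t - n) hs0 hs1
  linarith
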